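/- Let U_D(λ) be infinite and let f be the enumeration of the complete D-visit of U from λ (defined by iterating the unique one-step extension of D-visits). If μ₁ and μ₂ are both stable nodes (a node μ = f(m) is stable if every f(n) with n > m is a proper descendant of μ), then μ₁ and μ₂ are comparable under the prefix order; moreover, if μ is stable then U_D(μ) is infinite. -/

import Mathlib

/-- A `k`-ary tree: a prefix-closed set of finite lists over colors `< k`,
containing the empty list. -/
def IsKTree (k : ℕ) (U : Set (List ℕ)) : Prop :=
  [] ∈ U ∧ (∀ l ∈ U, ∀ p : List ℕ, p <+: l → p ∈ U) ∧ ∀ l ∈ U, ∀ c ∈ l, c < k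

/-- `L` is `D`-complete: every child (in `U`) with color in `D` of a node of `L` is in `L`. -/
def DComplete (U : Set (List ℕ)) (D : List ℕ) (L : List (List ℕ)) : Prop :=
  ∀ μ ∈ L, ∀ d ∈ D, μ ++ [d] ∈ U → μ ++ [d] ∈ L

/-- `ν` is the `n`-th `d`-expansion of `M`: `ν = μ ++ [d] ∈ U` for some `μ ∈ M`, and exactly
`n` nodes of `M` lexicographically below `μ` have a `d`-child in `U`. -/
def DExpansion (U : Set (List ℕ)) (M : List (List ℕ)) (n d : ℕ) (ν : List ℕ) : Prop :=
  ν ∈ U ∧ ∃ μ ∈ M, ν = μ ++ [d] ∧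
    {η | η ∈ M ∧ η ++ [d] ∈ U ∧ List.Lex (· < ·) η μ}.ncard = n

/-- `DVisit U D lam L` : `L` is a `D`-visit of `U` from `lam`. -/
inductive DVisit (U : Set (List ℕ)) : List ℕ → List ℕ → List (List ℕ) → Prop
  | base (lam : List ℕ) : lam ∈ U → DVisit U [] lam [lam]
  | step (d : ℕ) (D : List ℕ) (lam : List ℕ) (M : List (List ℕ))
      (Ls : List (List (List ℕ))) :
      DVisit U D lam M →
      (1 < Ls.length → DComplete U D M) →
      (∀ j : Fin Ls.length, Ls.get j ≠ []) →
      (∀ j : Fin Ls.length, DExpansion U M j.1 d ((Ls.get j).headI)) →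
      (∀ j : Fin Ls.length, DVisit U (D ++ [d]) ((Ls.get j).headI) (Ls.get j)) →
      (∀ j : Fin Ls.length, j.1 + 1 < Ls.length → DComplete U (d :: D) (Ls.get j)) →
      DVisit U (d :: D) lam (M ++ Ls.flatten)

/-- `U_D(lam)`: the nodes of `U` extending `lam` by a suffix with colors only from `D`. -/
def subtreeD (U : Set (List ℕ)) (D : List ℕ) (lam : List ℕ) : Set (List ℕ) :=
  {μ | μ ∈ U ∧ ∃ η : List ℕ, μ = lam ++ η ∧ ∀ c ∈ η, c ∈ D}

/-- `f` enumerates the complete `D`-visit of `U` from `lam`: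
each initial segment `[f 0, …, f m]` is a `D`-visit from `lam`. -/
def Enumerates (U : Set (List ℕ)) (D lam : List ℕ) (f : ℕ → List ℕ) : Prop :=
  ∀ m : ℕ, DVisit U D lam ((List.range (m + 1)).map f)

/-- `μ` is stable for the enumeration `f`: all later nodes are proper descendants of `μ`. -/
def Stable (f : ℕ → List ℕ) (μ : List ℕ) : Prop :=
  ∃ m, f m = μ ∧ ∀ n, m < n → μ <+: f n ∧ μ ≠ f n

/-- `r` is an infinite branch of the tree `T` (of finite lists): an infinite chain
under the prefix order, downward closed within `T`. -/
def IsInfBranchL (T : Set (List ℕ)) (r : Set (List ℕ)) : Prop :=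
  r ⊆ T ∧ r.Infinite ∧ (∀ μ ∈ r, ∀ ν ∈ r, μ <+: ν ∨ ν <+: μ) ∧
  (∀ μ ∈ r, ∀ η ∈ T, η <+: μ → η ∈ r)

/-!
Comparability is immediate: of two stable nodes, the one enumerated later is a descendant of the
other. For the second claim, every node of a `D`-visit from `λ` lies in `U_D(λ)`, and a visit with
a duplicate-free color list never repeats a node: at a step with new color `d`, the nodes grafted
in block `j` all extend the `d`-child of the `j`-th parent, so different blocks are told apart by
their parents, and none of them lies in the earlier part of the visit, whose words avoid `d`.
Hence `f` is injective, and the infinitely many `f n` with `n > m` all lie in `U_D(f m)`.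
-/

theorem List.eq_of_append_cons_eq_of_not_mem {α : Type*} {a : α} {s t l₁ l₂ : List α}
    (hs : a ∉ s) (ht : a ∉ t) (h : s ++ a :: l₁ = t ++ a :: l₂) : s = t := by
  induction s generalizing t with
  | nil =>
    cases t with
    | nil => rfl
    | cons b t => exact absurd (List.cons.inj h).1 (fun hab => ht (hab ▸ List.mem_cons_self))
  | cons b s ih =>
    cases t with
    | nil => exact absurd (List.cons.inj h).1 (fun hba => hs (hba ▸ List.mem_cons_self))
    | cons c t =>
      obtain ⟨rfl, htail⟩ := List.cons.inj h
      rw [ih (fun h => hs (List.mem_cons_of_mem b h)) (fun h => ht (List.mem_cons_of_mem b h)) htail]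

section subtreeD

variable {U : Set (List ℕ)} {D D' lam μ ν ν' : List ℕ} {d : ℕ}

theorem subtreeD_mono (h : ∀ c ∈ D, c ∈ D') : subtreeD U D lam ⊆ subtreeD U D' lam := by
  rintro μ ⟨hμ, η, rfl, hη⟩
  exact ⟨hμ, η, rfl, fun c hc => h c (hη c hc)⟩

theorem mem_subtreeD_trans (hμ : μ ∈ subtreeD U D lam) (hν : ν ∈ subtreeD U D μ) :
    ν ∈ subtreeD U D lam := by
  obtain ⟨-, η, rfl, hη⟩ := hμ
  obtain ⟨hν, η', rfl, hη'⟩ := hν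
  exact ⟨hν, η ++ η', List.append_assoc _ _ _, List.forall_mem_append.2 ⟨hη, hη'⟩⟩

theorem mem_subtreeD_of_prefix (hμ : μ ∈ subtreeD U D lam) (hν : ν ∈ subtreeD U D lam)
    (h : μ <+: ν) : ν ∈ subtreeD U D μ := by
  obtain ⟨-, η, rfl, -⟩ := hμ
  obtain ⟨hνU, η', rfl, hη'⟩ := hν
  obtain ⟨ρ, hρ⟩ := h
  have hη'_eq : η' = η ++ ρ := List.append_cancel_left (by rw [← hρ, List.append_assoc])
  exact ⟨hνU, ρ, hρ.symm, fun c hc => hη' c (hη'_eq ▸ List.mem_append_right η hc)⟩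

theorem append_cons_not_mem_subtreeD (hd : d ∉ D) (hν : ν ∈ subtreeD U D lam) (α : List ℕ) :
    ν ++ d :: α ∉ subtreeD U D lam := by
  rintro ⟨-, η, hη, hηD⟩
  obtain ⟨-, s, rfl, -⟩ := hν
  have hη_eq : η = s ++ d :: α := List.append_cancel_left (by rw [← hη, List.append_assoc])
  exact hd (hηD d (by simp [hη_eq]))

theorem eq_of_mem_subtreeD_of_append_cons_eq (hd : d ∉ D) (hν : ν ∈ subtreeD U D lam)
    (hν' : ν' ∈ subtreeD U D lam) {α β : List ℕ} (h : ν ++ d :: α = ν' ++ d :: β) : ν = ν' := by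
  obtain ⟨-, s, rfl, hs⟩ := hν
  obtain ⟨-, t, rfl, ht⟩ := hν'
  simp only [List.append_assoc, List.append_cancel_left_eq] at h
  rw [List.eq_of_append_cons_eq_of_not_mem (fun h => hd (hs d h)) (fun h => hd (ht d h)) h]

end subtreeD

namespace DVisit

variable {U : Set (List ℕ)} {D lam : List ℕ} {L : List (List ℕ)}

theorem subset_subtreeD (h : DVisit U D lam L) : ∀ μ ∈ L, μ ∈ subtreeD U D lam := by
  induction h with
  | base lam hlam =>
    simp only [List.mem_singleton, forall_eq]
    exact ⟨hlam, [], by simp, by simp⟩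
  | step d D lam M Ls _ _ _ hexp _ _ ihM ihLs =>
    have hmono : subtreeD U D lam ⊆ subtreeD U (d :: D) lam :=
      subtreeD_mono fun c => List.mem_cons_of_mem d
    intro μ hμ
    rcases List.mem_append.1 hμ with hμ | hμ
    · exact hmono (ihM μ hμ)
    · obtain ⟨_, hl, hμl⟩ := List.mem_flatten.1 hμ
      obtain ⟨j, rfl⟩ := List.mem_iff_get.1 hl
      obtain ⟨hU, ν, hνM, hhead, -⟩ := hexp j
      have hchild : (Ls.get j).headI ∈ subtreeD U (d :: D) lam :=
        mem_subtreeD_trans (hmono (ihM ν hνM)) ⟨hU, [d], hhead, by simp⟩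
      exact mem_subtreeD_trans hchild
        (subtreeD_mono (fun c hc => by simpa [or_comm] using hc) (ihLs j μ hμl))

theorem nodup (h : DVisit U D lam L) (hD : D.Nodup) : L.Nodup := by
  induction h with
  | base => exact List.nodup_singleton _
  | step d D lam M Ls hM _ _ hexp hvis _ ihM ihLs =>
    have hD' : (D ++ [d]).Nodup := List.nodup_append_comm.2 hD
    obtain ⟨hdD, hD⟩ := List.nodup_cons.1 hD
    have block : ∀ j : Fin Ls.length, ∃ ν ∈ M,
        {η | η ∈ M ∧ η ++ [d] ∈ U ∧ List.Lex (· < ·) η ν}.ncard = j ∧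
          ∀ x ∈ Ls.get j, ∃ α, x = ν ++ d :: α := by
      intro j
      obtain ⟨-, ν, hνM, hhead, hcard⟩ := hexp j
      refine ⟨ν, hνM, hcard, fun x hx => ?_⟩
      obtain ⟨-, α, rfl, -⟩ := (hvis j).subset_subtreeD x hx
      exact ⟨α, by rw [hhead]; simp⟩
    refine List.nodup_append.2 ⟨ihM hD, List.nodup_flatten.2 ⟨?_, ?_⟩, ?_⟩
    · intro l hl
      obtain ⟨j, rfl⟩ := List.mem_iff_get.1 hl
      exact ihLs j hD'
    · rw [List.pairwise_iff_get]
      intro i j hij x hxi hxj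
      obtain ⟨νi, hνi, hci, hi⟩ := block i
      obtain ⟨νj, hνj, hcj, hj⟩ := block j
      obtain ⟨α, rfl⟩ := hi x hxi
      obtain ⟨β, hβ⟩ := hj _ hxj
      obtain rfl := eq_of_mem_subtreeD_of_append_cons_eq hdD
        (hM.subset_subtreeD _ hνi) (hM.subset_subtreeD _ hνj) hβ
      exact hij.ne (Fin.ext (hci.symm.trans hcj))
    · intro x hxM y hy hxy
      obtain ⟨_, hl, hyl⟩ := List.mem_flatten.1 hy
      obtain ⟨j, rfl⟩ := List.mem_iff_get.1 hl
      obtain ⟨ν, hνM, -, hj⟩ := block j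
      obtain ⟨α, rfl⟩ := hj y hyl
      exact append_cons_not_mem_subtreeD hdD (hM.subset_subtreeD ν hνM) α
        (hxy ▸ hM.subset_subtreeD x hxM)

end DVisit

namespace Enumerates

variable {U : Set (List ℕ)} {D lam : List ℕ} {f : ℕ → List ℕ}

theorem mem_subtreeD (hf : Enumerates U D lam f) (n : ℕ) : f n ∈ subtreeD U D lam :=
  (hf n).subset_subtreeD _ (List.mem_map_of_mem (List.mem_range.2 n.lt_succ_self))

theorem injective (hf : Enumerates U D lam f) (hD : D.Nodup) : Function.Injective f := by
  intro a b hab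
  have hinj := (List.nodup_map_iff_inj_on List.nodup_range).1 ((hf (max a b)).nodup hD)
  exact hinj a (by simp) b (by simp) hab

end Enumerates

namespace Stable

variable {f : ℕ → List ℕ} {μ μ₁ μ₂ : List ℕ}

theorem prefix_or_prefix (h₁ : Stable f μ₁) (h₂ : Stable f μ₂) : μ₁ <+: μ₂ ∨ μ₂ <+: μ₁ := by
  obtain ⟨m₁, rfl, h₁⟩ := h₁
  obtain ⟨m₂, rfl, h₂⟩ := h₂
  rcases lt_trichotomy m₁ m₂ with h | rfl | h
  · exact Or.inl (h₁ m₂ h).1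
  · exact Or.inl List.prefix_rfl
  · exact Or.inr (h₂ m₁ h).1

theorem subtreeD_infinite {U : Set (List ℕ)} {D lam : List ℕ} (hμ : Stable f μ)
    (hf : Enumerates U D lam f) (hD : D.Nodup) : (subtreeD U D μ).Infinite := by
  obtain ⟨m, rfl, hm⟩ := hμ
  refine ((Set.Ioi_infinite m).image (hf.injective hD).injOn).mono ?_
  rintro _ ⟨n, hn, rfl⟩
  exact mem_subtreeD_of_prefix (hf.mem_subtreeD m) (hf.mem_subtreeD n) (hm n hn).1

end Stable

theorem stable_basic_general (U : Set (List ℕ))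
    (D : List ℕ) (hDnd : D.Nodup)
    (lam : List ℕ)
    (f : ℕ → List ℕ) (hf : Enumerates U D lam f) :
    (∀ μ₁ μ₂ : List ℕ, Stable f μ₁ → Stable f μ₂ → μ₁ <+: μ₂ ∨ μ₂ <+: μ₁) ∧
      (∀ μ : List ℕ, Stable f μ → (subtreeD U D μ).Infinite) :=
  ⟨fun _ _ h₁ h₂ => h₁.prefix_or_prefix h₂, fun _ hμ => hμ.subtreeD_infinite hf hDnd⟩

/-- stable nodes of the complete D-visit are comparable by prefix,
and below a stable node the D-subtree is infinite. -/
theorem stable_basic (k : ℕ) (U : Set (List ℕ)) (hU : IsKTree k U)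
    (D : List ℕ) (hDnd : D.Nodup) (hDk : ∀ d ∈ D, d < k)
    (lam : List ℕ) (hlam : lam ∈ U)
    (hinf : (subtreeD U D lam).Infinite)
    (f : ℕ → List ℕ) (hf : Enumerates U D lam f) :
    (∀ μ₁ μ₂ : List ℕ, Stable f μ₁ → Stable f μ₂ → μ₁ <+: μ₂ ∨ μ₂ <+: μ₁) ∧
      (∀ μ : List ℕ, Stable f μ → (subtreeD U D μ).Infinite) :=
  stable_basic_general U D hDnd lam f hf
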